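/- Let M be a simplicial complex, L a subcomplex of M, and let Γ(M,L) := {ϑ ∈ L : ϑ ⊆ η for some η ∈ M \ L} be the constrain complex of the pair (M,L). Assume that L collapses to a complex L' with Γ(M,L) ⊆ L'. Then M collapses to M' := L' ∪ (M \ L). -/

import Mathlib

/-- An (abstract) simplicial complex: a finite family of finite sets closed
under taking subsets. -/
def IsComplex {V : Type*} (K : Finset (Finset V)) : Prop :=
  ∀ α ∈ K, ∀ β ⊆ α, β ∈ K

/-- A face `τ` of `K` is maximal if no face of `K` strictly contains it. -/
def IsMaximalFace {V : Type*} (K : Finset (Finset V)) (τ : Finset V) : Prop :=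
  τ ∈ K ∧ ∀ η ∈ K, τ ⊆ η → η = τ

/-- `σ` is a free face of `K` with unique maximal coface `τ`:
`σ` is a nonempty non-maximal face contained in exactly one maximal face `τ`. -/
def IsFreePair {V : Type*} (K : Finset (Finset V)) (σ τ : Finset V) : Prop :=
  σ ∈ K ∧ σ.Nonempty ∧ ¬ IsMaximalFace K σ ∧
    IsMaximalFace K τ ∧ σ ⊆ τ ∧
    ∀ τ', IsMaximalFace K τ' → σ ⊆ τ' → τ' = τ

/-- The elementary collapse of `K` at the face `σ`:
remove `σ` and all faces above `σ`. -/
def collapseAt {V : Type*} [DecidableEq V] (K : Finset (Finset V)) (σ : Finset V) :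
    Finset (Finset V) :=
  K.filter fun ϑ => ¬ σ ⊆ ϑ

/-- `K'` is an elementary collapse of `K`. -/
def ElemCollapse {V : Type*} [DecidableEq V] (K K' : Finset (Finset V)) : Prop :=
  ∃ σ τ : Finset V, IsFreePair K σ τ ∧ K' = collapseAt K σ

/-- `K` collapses to `L`: a (possibly empty) sequence of elementary collapses
leads from `K` to `L`. -/
def CollapsesTo {V : Type*} [DecidableEq V] (K L : Finset (Finset V)) : Prop :=
  Relation.ReflTransGen ElemCollapse K L

/-- `K` has dimension exactly `d`: every face has at most `d + 1` vertices and
some face has exactly `d + 1` vertices (the dimension of a face `α` is `|α| - 1`). -/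
def DimEq {V : Type*} (K : Finset (Finset V)) (d : ℕ) : Prop :=
  (∀ α ∈ K, α.card ≤ d + 1) ∧ ∃ α ∈ K, α.card = d + 1

/-- The constrain complex of the pair `(M, L)`:
faces of `L` contained in some face of `M \ L`. -/
def constrainComplex {V : Type*} [DecidableEq V] (M L : Finset (Finset V)) :
    Finset (Finset V) :=
  L.filter fun ϑ => ∃ η ∈ M \ L, ϑ ⊆ η

/-!
Run the collapse of `L` onto `L'` inside `M`, keeping the faces of `M \ L` throughout.
A face removed along the way lies in `L \ L'`, hence outside `Γ(M, L)`, so it is contained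
in no face of `M \ L`. Thus each free face of the current complex stays free after adding
`M \ L`, and collapsing it removes nothing from `M \ L`.
-/

section

variable {V : Type*} [DecidableEq V]

lemma IsMaximalFace.of_union_left {K D : Finset (Finset V)} {τ : Finset V}
    (h : IsMaximalFace (K ∪ D) τ) (hτ : τ ∈ K) : IsMaximalFace K τ :=
  ⟨hτ, fun η hη => h.2 η (Finset.mem_union_left D hη)⟩

lemma IsMaximalFace.union {K D : Finset (Finset V)} {τ : Finset V}
    (h : IsMaximalFace K τ) (hD : ∀ η ∈ D, ¬ τ ⊆ η) : IsMaximalFace (K ∪ D) τ := by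
  refine ⟨Finset.mem_union_left D h.1, fun η hη hτη => ?_⟩
  rcases Finset.mem_union.mp hη with hηK | hηD
  · exact h.2 η hηK hτη
  · exact absurd hτη (hD η hηD)

lemma IsFreePair.union {K D : Finset (Finset V)} {σ τ : Finset V}
    (h : IsFreePair K σ τ) (hD : ∀ η ∈ D, ¬ σ ⊆ η) : IsFreePair (K ∪ D) σ τ := by
  obtain ⟨hσ, hσne, hσmax, hτmax, hστ, huniq⟩ := h
  refine ⟨Finset.mem_union_left D hσ, hσne, fun h => hσmax (h.of_union_left hσ),
    hτmax.union fun η hη hτη => hD η hη (hστ.trans hτη), hστ,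
    fun τ' hτ' hστ' => ?_⟩
  have hτ'K : τ' ∈ K := by
    rcases Finset.mem_union.mp hτ'.1 with hK | hD'
    · exact hK
    · exact absurd hστ' (hD τ' hD')
  exact huniq τ' (hτ'.of_union_left hτ'K) hστ'

lemma collapseAt_union {K D : Finset (Finset V)} {σ : Finset V}
    (hD : ∀ η ∈ D, ¬ σ ⊆ η) : collapseAt (K ∪ D) σ = collapseAt K σ ∪ D := by
  ext ϑ
  simp only [collapseAt, Finset.mem_filter, Finset.mem_union]
  constructor
  · rintro ⟨hϑ | hϑ, hσϑ⟩
    exacts [Or.inl ⟨hϑ, hσϑ⟩, Or.inr hϑ]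
  · rintro (⟨hϑ, hσϑ⟩ | hϑ)
    exacts [⟨Or.inl hϑ, hσϑ⟩, ⟨Or.inr hϑ, hD ϑ hϑ⟩]

lemma CollapsesTo.subset {K L : Finset (Finset V)} (h : CollapsesTo K L) :
    L ⊆ K := by
  induction h with
  | refl => exact subset_rfl
  | tail _ hstep ih =>
    obtain ⟨σ, τ, -, rfl⟩ := hstep
    exact (Finset.filter_subset _ _).trans ih

lemma CollapsesTo.union {K L D : Finset (Finset V)} (h : CollapsesTo K L)
    (hD : ∀ ϑ ∈ K \ L, ∀ η ∈ D, ¬ ϑ ⊆ η) : CollapsesTo (K ∪ D) (L ∪ D) := by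
  induction h using Relation.ReflTransGen.head_induction_on with
  | refl => exact Relation.ReflTransGen.refl
  | @head K K' hstep hrest ih =>
    obtain ⟨σ, τ, hfree, rfl⟩ := hstep
    have hσ : σ ∈ K \ L := by
      refine Finset.mem_sdiff.mpr ⟨hfree.1, fun hσL => ?_⟩
      simpa [collapseAt] using CollapsesTo.subset hrest hσL
    have hσD : ∀ η ∈ D, ¬ σ ⊆ η := hD σ hσ
    refine .head ⟨σ, τ, hfree.union hσD, (collapseAt_union hσD).symm⟩ (ih ?_)
    exact fun ϑ hϑ => hD ϑ (Finset.sdiff_subset_sdiff (Finset.filter_subset _ _) subset_rfl hϑ)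

end

theorem collapse_of_constrain_general {V : Type*} [DecidableEq V]
    (M L L' : Finset (Finset V))
    (hLM : L ⊆ M)
    (hcol : CollapsesTo L L') (hΓ : constrainComplex M L ⊆ L') :
    CollapsesTo M (L' ∪ (M \ L)) := by
  have hremoved : ∀ ϑ ∈ L \ L', ∀ η ∈ M \ L, ¬ ϑ ⊆ η := by
    intro ϑ hϑ η hη hϑη
    rw [Finset.mem_sdiff] at hϑ
    exact hϑ.2 (hΓ (Finset.mem_filter.mpr ⟨hϑ.1, η, hη, hϑη⟩))
  simpa only [Finset.union_sdiff_of_subset hLM] using hcol.union hremoved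

/-- If `L` is a subcomplex of `M` and `L` collapses to `L'` containing the
constrain complex `Γ(M, L)`, then `M` collapses to `L' ∪ (M \ L)`. -/
theorem collapse_of_constrain {V : Type*} [DecidableEq V]
    (M L L' : Finset (Finset V))
    (hM : IsComplex M) (hL : IsComplex L) (hLM : L ⊆ M)
    (hcol : CollapsesTo L L') (hΓ : constrainComplex M L ⊆ L') :
    CollapsesTo M (L' ∪ (M \ L)) :=
  collapse_of_constrain_general M L L' hLM hcol hΓ
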